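/- A monomial x_1^{d_1}⋯x_n^{d_n} in F_2[x_1,…,x_n] of total degree d with exactly r odd exponents d_i is hit (lies in the image of the positive-degree Steenrod operations) whenever α(d + r) > r, where α(m) denotes the number of 1's in the binary expansion of m. -/

import Mathlib

open MvPolynomial

/-- The action of the mod-2 Steenrod squares on F₂[x₁,…,xₙ]: F₂-linear operations
Sq i with Sq 0 = id, Sq 1 xᵢ = xᵢ², Sq k xᵢ = 0 for k ≥ 2, and the Cartan formula.
These properties determine the action uniquely. -/
structure SteenrodAction (n : ℕ) where
  Sq : ℕ → MvPolynomial (Fin n) (ZMod 2) →ₗ[ZMod 2] MvPolynomial (Fin n) (ZMod 2)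
  sq_zero : ∀ p, Sq 0 p = p
  sq_one_var : ∀ i, Sq 1 (X i) = X i ^ 2
  sq_var_eq_zero : ∀ i k, 2 ≤ k → Sq k (X i) = 0
  cartan : ∀ k u v, Sq k (u * v) = ∑ ij ∈ Finset.HasAntidiagonal.antidiagonal k, Sq ij.1 u * Sq ij.2 v

/-- `p` is hit: it lies in the span of the images of the positive-degree Steenrod operations. -/
def SteenrodAction.IsHit {n : ℕ} (A : SteenrodAction n)
    (p : MvPolynomial (Fin n) (ZMod 2)) : Prop :=
  p ∈ Submodule.span (ZMod 2) {q | ∃ i, 0 < i ∧ ∃ u, q = A.Sq i u}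

/-!
Split the monomial as `u * v ^ 2`, where `u` is the product of the `r` variables with odd
exponent and `v` has degree `s`, so that `d = 2 * s + r`. For the conjugates `χ^k = χ(Sq^k)`
the Cartan formula shows that `a * Sq^k b + χ^k a * b` is always hit; with `a = u`, `b = v`,
`k = s` the first summand is `u * v ^ 2` because `Sq^s v = v ^ 2`. It remains to see
`χ^s u = 0`: `χ^j x_i` is `x_i ^ (j + 1)` if `j + 1` is a power of two and `0` otherwise, so
`χ^s u ≠ 0` would write `s + r` as a sum of `r` powers of two, forcing
`α(d + r) = α(s + r) ≤ r`.
-/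

open Finset

namespace Finset.Nat

variable {M : Type*} [AddCommMonoid M]

theorem sum_antidiagonal_antidiagonal_right_comm (k : ℕ) (f : ℕ → ℕ → ℕ → M) :
    ∑ x ∈ antidiagonal k, ∑ y ∈ antidiagonal x.1, f y.1 y.2 x.2 =
      ∑ x ∈ antidiagonal k, ∑ y ∈ antidiagonal x.1, f y.1 x.2 y.2 := by
  simp only [Finset.sum_sigma']
  apply Finset.sum_nbij' (fun ⟨⟨_, j⟩, ⟨p, q⟩⟩ ↦ ⟨(p + j, q), (p, j)⟩)
    (fun ⟨⟨_, j⟩, ⟨p, q⟩⟩ ↦ ⟨(p + j, q), (p, j)⟩) <;> aesop (add simp [add_right_comm])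

theorem sum_antidiagonal_antidiagonal_add_add_add_comm (k : ℕ) (f : ℕ → ℕ → ℕ → ℕ → M) :
    ∑ x ∈ antidiagonal k, ∑ y ∈ antidiagonal x.1, ∑ z ∈ antidiagonal x.2, f y.1 y.2 z.1 z.2 =
      ∑ x ∈ antidiagonal k, ∑ y ∈ antidiagonal x.1, ∑ z ∈ antidiagonal x.2, f y.1 z.1 y.2 z.2 := by
  simp only [Finset.sum_sigma']
  apply Finset.sum_nbij' (fun ⟨_, ⟨(s, t), (p, q)⟩⟩ ↦ ⟨(s + p, t + q), ⟨(s, p), (t, q)⟩⟩)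
    (fun ⟨_, ⟨(s, t), (p, q)⟩⟩ ↦ ⟨(s + p, t + q), ⟨(s, p), (t, q)⟩⟩) <;>
    aesop (add simp [add_add_add_comm])

end Finset.Nat

namespace Nat

theorem digits_sum_add_le {p : ℕ} (hp : p.Prime) (m n : ℕ) :
    (p.digits (m + n)).sum ≤ (p.digits m).sum + (p.digits n).sum := by
  have := Fact.mk hp
  -- Legendre: `(p - 1) * v_p(m!) = m - s_p(m)`, and `m! * n!` divides `(m + n)!`.
  have hfac : padicValNat p m ! + padicValNat p n ! ≤ padicValNat p (m + n)! := by
    rw [← add_choose_mul_factorial_mul_factorial,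
      padicValNat.mul (mul_ne_zero (choose_pos (by omega)).ne' (factorial_ne_zero _))
        (factorial_ne_zero _),
      padicValNat.mul (choose_pos (by omega)).ne' (factorial_ne_zero _)]
    omega
  have hm := sub_one_mul_padicValNat_factorial (p := p) m
  have hn := sub_one_mul_padicValNat_factorial (p := p) n
  have hmn := sub_one_mul_padicValNat_factorial (p := p) (m + n)
  have := Nat.mul_le_mul_left (p - 1) hfac
  rw [Nat.mul_add] at this
  have := digit_sum_le p m
  have := digit_sum_le p n
  have := digit_sum_le p (m + n)
  omega

theorem digits_sum_base_mul {b : ℕ} (hb : 1 < b) (m : ℕ) :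
    (b.digits (b * m)).sum = (b.digits m).sum := by
  rcases m.eq_zero_or_pos with rfl | hm
  · simp
  · simp [digits_base_mul hb hm]

theorem digits_sum_base_pow {b : ℕ} (hb : 1 < b) (t : ℕ) : (b.digits (b ^ t)).sum = 1 := by
  induction t with
  | zero => simp [digits_of_lt b 1 one_ne_zero hb]
  | succ t ih => rw [pow_succ', digits_sum_base_mul hb, ih]

end Nat

namespace SteenrodAction

variable {n : ℕ} (A : SteenrodAction n)

local notation "P" => MvPolynomial (Fin n) (ZMod 2)

theorem sq_one {k : ℕ} (hk : 0 < k) : A.Sq k 1 = 0 := by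
  induction k using Nat.strong_induction_on with
  | _ k ih =>
    have h := A.cartan k 1 1
    rw [one_mul, sum_eq_add_of_mem (0, k) (k, 0) (by simp) (by simp) (by simp; omega)] at h
    · rwa [A.sq_zero, one_mul, mul_one, CharTwo.add_self_eq_zero] at h
    · rintro ⟨i, j⟩ hij ⟨hi0, hik⟩
      rw [HasAntidiagonal.mem_antidiagonal] at hij
      rw [ih i (by grind) (by grind), zero_mul]

theorem sq_X (i : Fin n) (k : ℕ) : A.Sq k (X i) = (Nat.choose 1 k : P) * X i ^ (1 + k) := by
  match k with
  | 0 => simp [A.sq_zero]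
  | 1 => simp [A.sq_one_var]
  | k + 2 => simp [A.sq_var_eq_zero i (k + 2) (by omega), Nat.choose_eq_zero_of_lt]

theorem sq_X_pow (i : Fin n) (c k : ℕ) : A.Sq k (X i ^ c) = (c.choose k : P) * X i ^ (c + k) := by
  induction c generalizing k with
  | zero =>
    rcases k.eq_zero_or_pos with rfl | hk
    · simp [A.sq_zero]
    · simp [A.sq_one hk, Nat.choose_eq_zero_of_lt hk]
  | succ c ih =>
    calc A.Sq k (X i ^ (c + 1))
        = ∑ x ∈ antidiagonal k,
            ((c.choose x.1 * Nat.choose 1 x.2 : ℕ) : P) * X i ^ (c + 1 + k) := by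
          rw [pow_succ, A.cartan]
          refine sum_congr rfl fun x hx => ?_
          rw [HasAntidiagonal.mem_antidiagonal] at hx
          rw [ih, sq_X, ← hx]
          push_cast
          ring
      _ = ((c + 1).choose k : P) * X i ^ (c + 1 + k) := by
          rw [← sum_mul, ← Nat.cast_sum, ← Nat.add_choose_eq]

theorem sq_X_two_pow (i : Fin n) (t : ℕ) {k : ℕ} (hk : 0 < k) :
    A.Sq k (X i ^ 2 ^ t) = if k = 2 ^ t then X i ^ 2 ^ (t + 1) else 0 := by
  rw [sq_X_pow]
  split_ifs with h
  · rw [h, Nat.choose_self, Nat.cast_one, one_mul, ← two_mul, pow_succ']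
  · rw [(CharP.cast_eq_zero_iff P 2 _).2 ((Nat.prime_two.dvd_choose_pow_iff).2 ⟨hk.ne', h⟩),
      zero_mul]

def HasTopSquare (m : ℕ) (p : P) : Prop :=
  A.Sq m p = p ^ 2 ∧ ∀ k, m < k → A.Sq k p = 0

theorem hasTopSquare_one : A.HasTopSquare 0 1 :=
  ⟨by rw [A.sq_zero, one_pow], fun _ hk => A.sq_one hk⟩

theorem hasTopSquare_X_pow (i : Fin n) (c : ℕ) : A.HasTopSquare c (X i ^ c) := by
  refine ⟨?_, fun k hk => ?_⟩
  · rw [sq_X_pow, Nat.choose_self, Nat.cast_one, one_mul, ← pow_mul, mul_two]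
  · rw [sq_X_pow, Nat.choose_eq_zero_of_lt hk, Nat.cast_zero, zero_mul]

variable {A} in
theorem HasTopSquare.mul {m m' : ℕ} {a b : P} (ha : A.HasTopSquare m a)
    (hb : A.HasTopSquare m' b) : A.HasTopSquare (m + m') (a * b) := by
  have vanish : ∀ i j, m < i ∨ m' < j → A.Sq i a * A.Sq j b = 0 := by
    rintro i j (hi | hj)
    · rw [ha.2 i hi, zero_mul]
    · rw [hb.2 j hj, mul_zero]
  refine ⟨?_, fun k hk => ?_⟩
  · rw [A.cartan, sum_eq_single (m, m') _ (by simp), ha.1, hb.1, mul_pow]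
    rintro ⟨i, j⟩ hij hne
    rw [HasAntidiagonal.mem_antidiagonal] at hij
    exact vanish i j (by grind)
  · rw [A.cartan]
    refine sum_eq_zero fun x hx => vanish x.1 x.2 ?_
    rw [HasAntidiagonal.mem_antidiagonal] at hx
    omega

theorem hasTopSquare_prod {ι : Type*} (s : Finset ι) (c : ι → ℕ) (f : ι → P)
    (h : ∀ i ∈ s, A.HasTopSquare (c i) (f i)) :
    A.HasTopSquare (∑ i ∈ s, c i) (∏ i ∈ s, f i) := by
  classical
  induction s using Finset.induction_on with
  | empty => simpa using A.hasTopSquare_one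
  | insert j s hj ih =>
    rw [sum_insert hj, prod_insert hj]
    exact (h j (mem_insert_self j s)).mul (ih fun i hi => h i (mem_insert_of_mem hi))

/-- The conjugates `χ(Sq^k)`, determined by `∑_{i+j=k} Sq^i ∘ χ^j = 0` for `k > 0`. -/
noncomputable def chi : ℕ → P → P
  | 0, p => p
  | k + 1, p => ∑ i ∈ range (k + 1), A.Sq (i + 1) (chi (k - i) p)

@[simp] theorem chi_zero (p : P) : A.chi 0 p = p := by
  rw [chi]

theorem chi_succ (k : ℕ) (p : P) :
    A.chi (k + 1) p = ∑ x ∈ antidiagonal k, A.Sq (x.1 + 1) (A.chi x.2 p) := by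
  rw [Finset.Nat.sum_antidiagonal_eq_sum_range_succ (fun i j => A.Sq (i + 1) (A.chi j p)), chi]

theorem sum_sq_chi (k : ℕ) (p : P) :
    ∑ x ∈ antidiagonal k, A.Sq x.1 (A.chi x.2 p) = if k = 0 then p else 0 := by
  cases k with
  | zero => simp [A.sq_zero]
  | succ k => rw [Finset.Nat.sum_antidiagonal_succ, A.sq_zero, ← chi_succ,
      CharTwo.add_self_eq_zero, if_neg k.succ_ne_zero]

theorem eq_chi_of_sum_sq (c : ℕ → P) (p : P)
    (hc : ∀ k, ∑ x ∈ antidiagonal k, A.Sq x.1 (c x.2) = if k = 0 then p else 0) (k : ℕ) :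
    c k = A.chi k p := by
  induction k using Nat.strong_induction_on with
  | _ k ih =>
    have h := hc k
    cases k with
    | zero => simpa [A.sq_zero] using h
    | succ k =>
      have hrest : ∑ x ∈ antidiagonal k, A.Sq (x.1 + 1) (c x.2) = A.chi (k + 1) p := by
        rw [chi_succ]
        refine sum_congr rfl fun x hx => ?_
        rw [ih x.2 (by grind [HasAntidiagonal.mem_antidiagonal])]
      rwa [Finset.Nat.sum_antidiagonal_succ, A.sq_zero, if_neg k.succ_ne_zero, hrest,
        add_eq_zero_iff_eq_neg, CharTwo.neg_eq] at h

theorem chi_one {k : ℕ} (hk : 0 < k) : A.chi k 1 = 0 := by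
  refine (A.eq_chi_of_sum_sq (fun j => if j = 0 then 1 else 0) 1 (fun k => ?_) k).symm.trans
    (if_neg hk.ne')
  rw [sum_eq_single (k, 0) (by aesop) (by simp)]
  rcases k.eq_zero_or_pos with rfl | hk
  · simp [A.sq_zero]
  · simp [A.sq_one hk, hk.ne']

theorem chi_mul (k : ℕ) (a b : P) :
    A.chi k (a * b) = ∑ x ∈ antidiagonal k, A.chi x.1 a * A.chi x.2 b := by
  refine (A.eq_chi_of_sum_sq (fun j => ∑ x ∈ antidiagonal j, A.chi x.1 a * A.chi x.2 b) (a * b)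
    (fun k => ?_) k).symm
  calc ∑ x ∈ antidiagonal k, A.Sq x.1 (∑ y ∈ antidiagonal x.2, A.chi y.1 a * A.chi y.2 b)
      = ∑ x ∈ antidiagonal k, ∑ y ∈ antidiagonal x.1, ∑ z ∈ antidiagonal x.2,
          A.Sq y.1 (A.chi z.1 a) * A.Sq y.2 (A.chi z.2 b) := by
        refine sum_congr rfl fun x _ => ?_
        simp only [map_sum, A.cartan]
        exact sum_comm
    _ = ∑ x ∈ antidiagonal k, (∑ y ∈ antidiagonal x.1, A.Sq y.1 (A.chi y.2 a)) *
          ∑ z ∈ antidiagonal x.2, A.Sq z.1 (A.chi z.2 b) := by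
        rw [Finset.Nat.sum_antidiagonal_antidiagonal_add_add_add_comm k
          (fun s t p q => A.Sq s (A.chi p a) * A.Sq t (A.chi q b))]
        simp only [sum_mul_sum]
    _ = if k = 0 then a * b else 0 := by
        simp only [sum_sq_chi, ite_zero_mul_ite_zero]
        simp [← Prod.mk_eq_zero, eq_comm]

theorem isHit_sq {k : ℕ} (hk : 0 < k) (u : P) : A.IsHit (A.Sq k u) :=
  Submodule.subset_span ⟨k, hk, u, rfl⟩

theorem isHit_mul_sq_add_chi_mul (k : ℕ) (a b : P) :
    A.IsHit (a * A.Sq k b + A.chi k a * b) := by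
  have key : ∑ x ∈ antidiagonal k, A.Sq x.1 (A.chi x.2 a * b) = a * A.Sq k b :=
    calc ∑ x ∈ antidiagonal k, A.Sq x.1 (A.chi x.2 a * b)
        = ∑ x ∈ antidiagonal k, ∑ y ∈ antidiagonal x.1, A.Sq y.1 (A.chi y.2 a) * A.Sq x.2 b := by
          simp only [A.cartan]
          exact (Finset.Nat.sum_antidiagonal_antidiagonal_right_comm k
            (fun s j q => A.Sq s (A.chi j a) * A.Sq q b)).symm
      _ = a * A.Sq k b := by
          simp only [← sum_mul, sum_sq_chi]
          rw [sum_eq_single (0, k) (by grind [HasAntidiagonal.mem_antidiagonal]) (by simp),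
            if_pos rfl]
  rw [← key, ← add_sum_erase _ _ (show (0, k) ∈ antidiagonal k by simp), A.sq_zero,
    add_right_comm, CharTwo.add_self_eq_zero, zero_add]
  refine Submodule.sum_mem _ fun x hx => A.isHit_sq (Nat.pos_of_ne_zero fun h => ?_) _
  grind [HasAntidiagonal.mem_antidiagonal]

open Classical in
theorem chi_X (i : Fin n) (k : ℕ) :
    A.chi k (X i) = if ∃ t, k + 1 = 2 ^ t then X i ^ (k + 1) else 0 := by
  induction k using Nat.strong_induction_on with
  | _ k ih =>
    cases k with
    | zero => simp [show ∃ t, 1 = 2 ^ t from ⟨0, rfl⟩]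
    | succ m =>
      -- `(2^t).choose j` is odd only for `j = 0` and `j = 2^t`, so only a diagonal term survives.
      have term : ∀ x ∈ antidiagonal m, A.Sq (x.1 + 1) (A.chi x.2 (X i)) =
          if x.1 = x.2 ∧ ∃ t, x.2 + 1 = 2 ^ t then X i ^ (m + 2) else 0 := by
        intro x hx
        rw [HasAntidiagonal.mem_antidiagonal] at hx
        rw [ih x.2 (by omega)]
        split_ifs with hpow hdiag hdiag
        · obtain ⟨t, ht⟩ := hpow
          rw [ht, A.sq_X_two_pow i t x.1.succ_pos, if_pos (by omega), pow_succ]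
          congr 1
          omega
        · obtain ⟨t, ht⟩ := hpow
          rw [ht, A.sq_X_two_pow i t x.1.succ_pos, if_neg fun h => hdiag ⟨by omega, t, ht⟩]
        · exact absurd hdiag.2 hpow
        · exact map_zero _
      rw [chi_succ, sum_congr rfl term]
      by_cases hpow : ∃ t, m + 1 + 1 = 2 ^ t
      · obtain ⟨t, ht⟩ := hpow
        obtain ⟨s, rfl⟩ : ∃ s, t = s + 1 := ⟨t - 1, by cases t <;> simp_all⟩
        rw [pow_succ] at ht
        rw [sum_eq_single (2 ^ s - 1, 2 ^ s - 1), if_pos ⟨rfl, s, by omega⟩,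
          if_pos ⟨s + 1, by rw [pow_succ]; omega⟩]
        · rintro ⟨a, b⟩ hab hne
          rw [HasAntidiagonal.mem_antidiagonal] at hab
          exact if_neg fun ⟨hd, _⟩ => hne (by simp only at hd ⊢; ext <;> simp <;> omega)
        · simp only [HasAntidiagonal.mem_antidiagonal]
          omega
      · rw [if_neg hpow]
        exact sum_eq_zero fun x hx => if_neg fun ⟨_, t, ht⟩ =>
          hpow ⟨t + 1, by rw [HasAntidiagonal.mem_antidiagonal] at hx; rw [pow_succ]; omega⟩

theorem chi_prod_X_eq_zero (T : Finset (Fin n)) {k : ℕ}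
    (h : #T < (Nat.digits 2 (k + #T)).sum) : A.chi k (∏ i ∈ T, X i) = 0 := by
  classical
  induction T using Finset.induction_on generalizing k with
  | empty =>
    rw [prod_empty]
    exact A.chi_one (Nat.pos_of_ne_zero fun hk => by simp [hk] at h)
  | insert j T hj ih =>
    rw [prod_insert hj, chi_mul]
    refine sum_eq_zero fun x hx => ?_
    rw [HasAntidiagonal.mem_antidiagonal] at hx
    rw [chi_X]
    split_ifs with hpow
    · obtain ⟨t, ht⟩ := hpow
      have hsplit := Nat.digits_sum_add_le Nat.prime_two (2 ^ t) (x.2 + #T)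
      rw [Nat.digits_sum_base_pow one_lt_two] at hsplit
      rw [card_insert_of_notMem hj, show k + (#T + 1) = 2 ^ t + (x.2 + #T) by omega] at h
      rw [ih (by omega), mul_zero]
    · rw [zero_mul]

end SteenrodAction

theorem Finset.prod_pow_eq_prod_filter_odd_mul_sq {ι M : Type*} [CommMonoid M] (s : Finset ι)
    (x : ι → M) (d : ι → ℕ) :
    ∏ i ∈ s, x i ^ d i = (∏ i ∈ s with Odd (d i), x i) * (∏ i ∈ s, x i ^ (d i / 2)) ^ 2 := by
  rw [prod_filter, ← prod_pow, ← prod_mul_distrib]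
  refine prod_congr rfl fun i _ => ?_
  rw [← pow_mul]
  split_ifs with hodd
  · rw [← pow_succ']
    congr 1
    grind
  · rw [one_mul]
    congr 1
    grind

theorem Finset.sum_eq_two_mul_sum_div_two_add_card_filter_odd {ι : Type*} (s : Finset ι)
    (d : ι → ℕ) : ∑ i ∈ s, d i = 2 * ∑ i ∈ s, d i / 2 + #{i ∈ s | Odd (d i)} := by
  rw [card_filter, mul_sum, ← sum_add_distrib]
  refine sum_congr rfl fun i _ => ?_
  split_ifs <;> grind

/-- Wood's theorem / Peterson conjecture: a monomial of total degree d
with exactly r odd exponents is hit whenever α(d + r) > r, where α counts binary 1s. -/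
theorem stmt11 (n : ℕ) (A : SteenrodAction n) (d : Fin n → ℕ)
    (h : (Nat.digits 2 ((∑ i, d i) +
            (Finset.univ.filter fun i => Odd (d i)).card)).sum >
          (Finset.univ.filter fun i => Odd (d i)).card) :
    A.IsHit (∏ i, X i ^ d i) := by
  have hdeg := sum_eq_two_mul_sum_div_two_add_card_filter_odd univ d
  have htop : A.Sq (∑ i, d i / 2) (∏ i, X i ^ (d i / 2)) = (∏ i, X i ^ (d i / 2)) ^ 2 :=
    (A.hasTopSquare_prod univ _ _ fun i _ => A.hasTopSquare_X_pow i (d i / 2)).1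
  have hchi : A.chi (∑ i, d i / 2) (∏ i ∈ univ with Odd (d i), X i) = 0 := by
    refine A.chi_prod_X_eq_zero _ ?_
    rwa [show ∑ i, d i + #(univ.filter fun i => Odd (d i)) =
      2 * (∑ i, d i / 2 + #(univ.filter fun i => Odd (d i))) by omega,
      Nat.digits_sum_base_mul one_lt_two] at h
  have hit := A.isHit_mul_sq_add_chi_mul (∑ i, d i / 2) (∏ i ∈ univ with Odd (d i), X i)
    (∏ i, X i ^ (d i / 2))
  rwa [htop, hchi, zero_mul, add_zero, ← prod_pow_eq_prod_filter_odd_mul_sq] at hit
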